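/- Suppose $\sigma$ is a $K$-algebra endomorphism of $L$ such that $\sigma(y_n) = \frac{P_{n-2}}{P_{n-1}} \cdot \frac{F_{n-1}}{y_{n-1}}$ for all $n \in \mathbb{Z}/m\mathbb{Z}$. Then $\sigma(z_n) = z_n$ for every $n \in \mathbb{Z}/m\mathbb{Z}$; equivalently, the identity $\frac{P_{n-2} F_{n-1}}{P_{n-1} y_{n-1}} + \frac{P_n\, y_n}{P_{n-1}} = y_n + \frac{F_n}{y_{n+1}}$ holds in $L$. -/

import Mathlib

/- Setting: `Lm K m` is the field of fractions of the (Laurent) polynomial ring over a field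
`K` in commuting variables `yv n` indexed by `n : ZMod m`, with fixed scalars `F n : K`. -/

noncomputable section

variable (K : Type) [Field K] (m : ℕ) [NeZero m]

/-- The ambient field `L`. -/
abbrev Lm := FractionRing (MvPolynomial (ZMod m) K)

/-- The variable `y_n`. -/
def yv (n : ZMod m) : Lm K m :=
  algebraMap (MvPolynomial (ZMod m) K) (Lm K m) (MvPolynomial.X n)

variable (F : ZMod m → K)

/-- The scalar `F_n` viewed inside `L`. -/
def Fc (n : ZMod m) : Lm K m := algebraMap K (Lm K m) (F n)

/-- `X_n = F_n / (y_n y_{n+1})`. -/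
def Xv (n : ZMod m) : Lm K m := Fc K m F n / (yv K m n * yv K m (n + 1))

/-- `P_n = 1 + ∑_{k=0}^{m-2} X_n X_{n-1} ⋯ X_{n-k}`. -/
def Pv (n : ZMod m) : Lm K m :=
  1 + ∑ k ∈ Finset.range (m - 1), ∏ j ∈ Finset.range (k + 1), Xv K m F (n - (j : ZMod m))

/-- `z_n = y_n (1 + X_n)`. -/
def zv (n : ZMod m) : Lm K m := yv K m n * (1 + Xv K m F n)

/-- `𝐲 = ∏_n y_n`. -/
def boldy : Lm K m := ∏ n : ZMod m, yv K m n

/-- `𝐅 = ∏_n F_n` (viewed in `L`). -/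
def boldF : Lm K m := ∏ n : ZMod m, Fc K m F n

/-- `δ = 𝐲 - 𝐅/𝐲`. -/
def deltav : Lm K m := boldy K m - boldF K m F / boldy K m

/-!
The identity rests on the recurrence `X_{n-1} P_{n-2} + P_n = (1 + X_n) P_{n-1}`: multiplying
`P_{n-1}` by `X_n` shifts every partial product `X_n ⋯ X_{n-k}` by one step, so
`P_n + ∏_i X_i = 1 + X_n P_{n-1}` (the longest shifted product is the full cyclic one), and
two consecutive instances of this subtract to the recurrence. Dividing by `P_{n-1}` and writing
`F_{n-1} / y_{n-1} = X_{n-1} y_n` gives the identity, which is `σ(z_n) = z_n` once `σ(y_n)` and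
`σ(y_{n+1})` are substituted.

The division needs `P_n ≠ 0`: clearing the denominators `y_{n-j} y_{n-j+1}` (`j < m - 1`) turns
`P_n` into a polynomial which becomes monic of degree `2(m - 1)` when every `y_i` is replaced by
one indeterminate `t`.
-/

open Finset Polynomial

theorem Finset.mul_one_add_sum_range_prod_succ {R : Type*} [CommSemiring R] (g : ℕ → R)
    (N : ℕ) :
    g 0 * (1 + ∑ k ∈ range N, ∏ j ∈ range (k + 1), g (j + 1)) =
      ∑ k ∈ range (N + 1), ∏ j ∈ range (k + 1), g j := by
  rw [sum_range_succ', mul_comm, add_mul, one_mul, sum_mul, add_comm]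
  simp only [prod_range_succ' g, zero_add, range_one, prod_singleton]

theorem Finset.one_add_sum_range_prod_mul_prod {R : Type*} [CommSemiring R] (x d f : ℕ → R)
    (hxd : ∀ j, x j * d j = f j) (N : ℕ) :
    (1 + ∑ k ∈ range N, ∏ j ∈ range (k + 1), x j) * ∏ j ∈ range N, d j =
      ∏ j ∈ range N, d j +
        ∑ k ∈ range N, (∏ j ∈ range (k + 1), f j) * ∏ j ∈ Ico (k + 1) N, d j := by
  rw [add_mul, one_mul, sum_mul]
  congr 1
  refine sum_congr rfl fun k hk => ?_
  rw [← prod_range_mul_prod_Ico d (mem_range.mp hk), ← mul_assoc, ← prod_mul_distrib]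
  simp only [hxd]

theorem Polynomial.monic_X_pow_add_sum_C_mul_X_pow {R ι : Type*} [CommSemiring R] [Nontrivial R]
    (s : Finset ι) (a : ι → R) (e : ι → ℕ) {n : ℕ} (he : ∀ i ∈ s, e i < n) :
    (X ^ n + ∑ i ∈ s, C (a i) * X ^ e i).Monic := by
  refine monic_X_pow_add ((degree_sum_le _ _).trans_lt ?_)
  refine (Finset.sup_lt_iff (WithBot.bot_lt_coe n)).mpr fun i hi => ?_
  exact (degree_C_mul_X_pow_le _ _).trans_lt (WithBot.coe_lt_coe.mpr (he i hi))

theorem ZMod.prod_univ_eq_prod_range_sub {M : Type*} [CommMonoid M] {m : ℕ} [NeZero m]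
    (f : ZMod m → M) (n : ZMod m) : ∏ i : ZMod m, f i = ∏ j ∈ range m, f (n - j) := by
  refine prod_nbij' (fun i => (n - i).val) (fun j => n - j)
    (fun i _ => mem_range.mpr (ZMod.val_lt _)) (fun _ _ => mem_univ _) (fun i _ => by simp)
    (fun j hj => ?_) (fun i _ => by simp)
  simp [ZMod.val_natCast_of_lt (mem_range.mp hj)]

section

omit [NeZero m]
variable {K m F}

theorem yv_ne_zero (n : ZMod m) : yv K m n ≠ 0 :=
  (map_ne_zero_iff _ (IsFractionRing.injective _ _)).mpr (MvPolynomial.X_ne_zero n)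

theorem Xv_mul_yv_mul_yv (n : ZMod m) : Xv K m F n * (yv K m n * yv K m (n + 1)) = Fc K m F n := by
  rw [Xv, div_mul_cancel₀ _ (mul_ne_zero (yv_ne_zero n) (yv_ne_zero (n + 1)))]

theorem zv_eq_yv_add_Fc_div (n : ZMod m) : zv K m F n = yv K m n + Fc K m F n / yv K m (n + 1) := by
  rw [zv, Xv]
  field_simp [yv_ne_zero]

theorem exists_Pv_mul_prod_eq_algebraMap (n : ZMod m) :
    ∃ q : MvPolynomial (ZMod m) K, (MvPolynomial.aeval (fun _ => (X : K[X])) q).Monic ∧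
      Pv K m F n * ∏ j ∈ range (m - 1), (yv K m (n - (j : ZMod m)) * yv K m (n - j + 1)) =
        algebraMap _ (Lm K m) q := by
  let d (j : ℕ) : MvPolynomial (ZMod m) K := .X (n - (j : ZMod m)) * .X (n - j + 1)
  refine ⟨∏ j ∈ range (m - 1), d j + ∑ k ∈ range (m - 1),
    .C (∏ j ∈ range (k + 1), F (n - (j : ZMod m))) * ∏ j ∈ Ico (k + 1) (m - 1), d j, ?_, ?_⟩
  · have hmonic := monic_X_pow_add_sum_C_mul_X_pow (range (m - 1))
      (fun k => ∏ j ∈ range (k + 1), F (n - (j : ZMod m))) (fun k => 2 * (m - 1 - (k + 1)))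
      (n := 2 * (m - 1)) (fun k hk => by have := mem_range.mp hk; omega)
    simpa [d, ← sq, ← pow_mul] using hmonic
  · rw [Pv, one_add_sum_range_prod_mul_prod _ _ _ (fun j => Xv_mul_yv_mul_yv (n - (j : ZMod m)))]
    simp [d, Fc, yv, map_prod, IsScalarTower.algebraMap_apply K (MvPolynomial (ZMod m) K) (Lm K m)]

theorem Pv_ne_zero (n : ZMod m) : Pv K m F n ≠ 0 := by
  obtain ⟨q, hmonic, hq⟩ := exists_Pv_mul_prod_eq_algebraMap (F := F) n
  have hq0 : q ≠ 0 := fun h => hmonic.ne_zero (by rw [h, map_zero])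
  intro h
  rw [h, zero_mul, eq_comm, map_eq_zero_iff _ (IsFractionRing.injective _ _)] at hq
  exact hq0 hq

end

section

variable {K m F}

theorem Pv_add_prod_Xv (n : ZMod m) :
    Pv K m F n + ∏ i, Xv K m F i = 1 + Xv K m F n * Pv K m F (n - 1) := by
  have hm : m - 1 + 1 = m := Nat.sub_add_cancel NeZero.one_le
  have hshift := mul_one_add_sum_range_prod_succ (fun j : ℕ => Xv K m F (n - j)) (m - 1)
  simp only [Nat.cast_zero, sub_zero, Nat.cast_add, Nat.cast_one, sub_add_eq_sub_sub_swap] at hshift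
  rw [Pv, Pv, hshift, sum_range_succ, hm, ZMod.prod_univ_eq_prod_range_sub _ n]
  ring

theorem Xv_mul_Pv_add_Pv (n : ZMod m) :
    Xv K m F (n - 1) * Pv K m F (n - 2) + Pv K m F n = (1 + Xv K m F n) * Pv K m F (n - 1) := by
  have h := Pv_add_prod_Xv (K := K) (F := F) (n - 1 : ZMod m)
  rw [sub_sub, one_add_one_eq_two] at h
  linear_combination Pv_add_prod_Xv (F := F) n - h

theorem Pv_div_add_Pv_div_eq_zv (n : ZMod m) :
    Pv K m F (n - 2) * Fc K m F (n - 1) / (Pv K m F (n - 1) * yv K m (n - 1)) +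
        Pv K m F n * yv K m n / Pv K m F (n - 1) = zv K m F n := by
  have hFc : Fc K m F (n - 1) = Xv K m F (n - 1) * (yv K m (n - 1) * yv K m n) := by
    rw [← Xv_mul_yv_mul_yv, sub_add_cancel]
  have := Pv_ne_zero (F := F) (n - 1)
  have := yv_ne_zero (K := K) (n - 1)
  rw [zv, hFc]
  field_simp
  linear_combination yv K m n * Xv_mul_Pv_add_Pv (F := F) n

end

theorem stmt_14 (hF : ∀ n, F n ≠ 0)
    (σ : Lm K m →ₐ[K] Lm K m)
    (hσ : ∀ n : ZMod m,
      σ (yv K m n) = Pv K m F (n - 2) / Pv K m F (n - 1) * (Fc K m F (n - 1) / yv K m (n - 1))) :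
    (∀ n : ZMod m, σ (zv K m F n) = zv K m F n) ∧
      ∀ n : ZMod m,
        Pv K m F (n - 2) * Fc K m F (n - 1) / (Pv K m F (n - 1) * yv K m (n - 1)) +
            Pv K m F n * yv K m n / Pv K m F (n - 1) =
          yv K m n + Fc K m F n / yv K m (n + 1) := by
  refine ⟨fun n => ?_, fun n => by rw [Pv_div_add_Pv_div_eq_zv, zv_eq_yv_add_Fc_div]⟩
  have hFn : Fc K m F n ≠ 0 := (map_ne_zero_iff _ (algebraMap K _).injective).mpr (hF n)
  have := yv_ne_zero (K := K) n
  have := Pv_ne_zero (F := F) n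
  have hσF : σ (Fc K m F n) = Fc K m F n := σ.commutes (F n)
  rw [zv_eq_yv_add_Fc_div, map_add, map_div₀, hσ, hσ, hσF, add_sub_cancel_right,
    show n + 1 - 2 = n - 1 by ring, ← zv_eq_yv_add_Fc_div, ← Pv_div_add_Pv_div_eq_zv]
  field_simp
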